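/- (Full feasibility of the binding contract) Let 0 < θ_1 ≤ … ≤ θ_K, 0 ≤ L_1 ≤ … ≤ L_K, f, a, L_max > 0, and define rewards by R_1 = (a/(f·L_max))·(L_1/θ_1) and R_k = R_{k-1} + (a/(f·L_max))·((L_k − L_{k-1})/θ_k) for k ≥ 2. Then the contract {(L_k, R_k)} satisfies all IR constraints (f·θ_k·R_k − a·L_k/L_max ≥ 0 for all k) and all IC constraints (f·θ_k·R_k − a·L_k/L_max ≥ f·θ_k·R_n − a·L_n/L_max for all k, n). -/
import Mathlib


theorem stmt_11 (K : ℕ) (f a Lmax : ℝ) (θ L R : ℕ → ℝ)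
    (hf : 0 < f) (ha : 0 < a) (hLmax : 0 < Lmax)
    (hθpos : ∀ k, 1 ≤ k → k ≤ K → 0 < θ k)
    (hθmono : ∀ i, 1 ≤ i → i < K → θ i ≤ θ (i + 1))
    (hL1 : 0 ≤ L 1)
    (hLmono : ∀ i, 1 ≤ i → i < K → L i ≤ L (i + 1))
    (hR1 : R 1 = (a / (f * Lmax)) * (L 1 / θ 1))
    (hRrec : ∀ k, 2 ≤ k → k ≤ K →
      R k = R (k - 1) + (a / (f * Lmax)) * ((L k - L (k - 1)) / θ k)) :
    (∀ k, 1 ≤ k → k ≤ K → f * θ k * R k - a * (L k / Lmax) ≥ 0) ∧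
    (∀ k n, 1 ≤ k → k ≤ K → 1 ≤ n → n ≤ K →
      f * θ k * R k - a * (L k / Lmax) ≥ f * θ k * R n - a * (L n / Lmax)) := by
  have hf' : f ≠ 0 := hf.ne'
  have hLmax' : Lmax ≠ 0 := hLmax.ne'
  -- θ monotone (general)
  have hθle : ∀ m n, 1 ≤ m → m ≤ n → n ≤ K → θ m ≤ θ n := by
    intro m n hm hmn
    induction n, hmn using Nat.le_induction with
    | base => intro _; exact le_rfl
    | succ n hn ih =>
      intro hnK
      exact le_trans (ih (by omega)) (hθmono n (by omega) (by omega))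
  -- L monotone (general)
  have hLle : ∀ m n, 1 ≤ m → m ≤ n → n ≤ K → L m ≤ L n := by
    intro m n hm hmn
    induction n, hmn using Nat.le_induction with
    | base => intro _; exact le_rfl
    | succ n hn ih =>
      intro hnK
      exact le_trans (ih (by omega)) (hLmono n (by omega) (by omega))
  -- L nonneg
  have hLnn : ∀ n, 1 ≤ n → n ≤ K → 0 ≤ L n := by
    intro n hn hnK
    exact le_trans hL1 (hLle 1 n le_rfl hn hnK)
  -- R nonneg
  have hRnn : ∀ n, 1 ≤ n → n ≤ K → 0 ≤ R n := by
    intro n hn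
    induction n, hn using Nat.le_induction with
    | base =>
      intro h1K
      rw [hR1]
      have hθ1 := hθpos 1 le_rfl h1K
      positivity
    | succ n hn ih =>
      intro hnK
      have hrec := hRrec (n + 1) (by omega) hnK
      simp only [Nat.add_sub_cancel] at hrec
      have hθ := hθpos (n + 1) (by omega) hnK
      have hΔ : 0 ≤ L (n + 1) - L n := by
        have := hLmono n (by omega) (by omega); linarith
      have h1 : 0 ≤ (a / (f * Lmax)) * ((L (n + 1) - L n) / θ (n + 1)) := by
        positivity
      have := ih (by omega)
      rw [hrec]; linarith
  -- step identity
  have hstep : ∀ k j, 1 ≤ j → j + 1 ≤ K →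
      f * θ k * R (j + 1) - a * (L (j + 1) / Lmax) =
      f * θ k * R j - a * (L j / Lmax)
        + (a / Lmax) * (L (j + 1) - L j) * (θ k / θ (j + 1) - 1) := by
    intro k j hj hjK
    have hrec := hRrec (j + 1) (by omega) hjK
    simp only [Nat.add_sub_cancel] at hrec
    have hθ : θ (j + 1) ≠ 0 := (hθpos (j + 1) (by omega) hjK).ne'
    rw [hrec]
    field_simp
    ring
  -- IR
  have hIR : ∀ k, 1 ≤ k → k ≤ K → f * θ k * R k - a * (L k / Lmax) ≥ 0 := by
    intro k hk
    induction k, hk using Nat.le_induction with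
    | base =>
      intro h1K
      have hθ1 : θ 1 ≠ 0 := (hθpos 1 le_rfl h1K).ne'
      have : f * θ 1 * R 1 - a * (L 1 / Lmax) = 0 := by
        rw [hR1]; field_simp; ring
      linarith
    | succ k hk ih =>
      intro hkK
      have h1 := hstep (k + 1) k hk hkK
      have hθ : θ (k + 1) ≠ 0 := (hθpos (k + 1) (by omega) hkK).ne'
      rw [div_self hθ] at h1
      have hRk := hRnn k hk (by omega)
      have hθmo := hθmono k hk (by omega)
      have := ih (by omega)
      have hdiff : f * θ k * R k ≤ f * θ (k + 1) * R k := by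
        have : 0 ≤ f * R k := by positivity
        nlinarith
      simp at h1
      linarith
  refine ⟨hIR, ?_⟩
  intro k n hk hkK hn hnK
  rcases le_or_gt n k with hnk | hkn
  · -- n ≤ k : show g k n ≤ g k k via upward induction
    have aux : ∀ j, n ≤ j → j ≤ k →
        f * θ k * R n - a * (L n / Lmax) ≤ f * θ k * R j - a * (L j / Lmax) := by
      intro j hnj
      induction j, hnj using Nat.le_induction with
      | base => intro _; exact le_rfl
      | succ j hnj ih =>
        intro hjk
        have h1 := hstep k j (by omega) (by omega)
        have hθj := hθpos (j + 1) (by omega) (by omega)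
        have hterm : 0 ≤ (a / Lmax) * (L (j + 1) - L j) * (θ k / θ (j + 1) - 1) := by
          have hΔ : 0 ≤ L (j + 1) - L j := by
            have := hLmono j (by omega) (by omega); linarith
          have hθle' : θ (j + 1) ≤ θ k := hθle (j + 1) k (by omega) (by omega) hkK
          have h2 : 1 ≤ θ k / θ (j + 1) := (one_le_div hθj).mpr hθle'
          have h3 : 0 ≤ a / Lmax := by positivity
          exact mul_nonneg (mul_nonneg h3 hΔ) (by linarith)
        have := ih (by omega)
        linarith
    exact aux k hnk le_rfl
  · -- k < n : downward
    have aux : ∀ j, k ≤ j → j ≤ K →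
        f * θ k * R j - a * (L j / Lmax) ≤ f * θ k * R k - a * (L k / Lmax) := by
      intro j hkj
      induction j, hkj using Nat.le_induction with
      | base => intro _; exact le_rfl
      | succ j hkj ih =>
        intro hjK
        have h1 := hstep k j (by omega) hjK
        have hθj := hθpos (j + 1) (by omega) hjK
        have hterm : (a / Lmax) * (L (j + 1) - L j) * (θ k / θ (j + 1) - 1) ≤ 0 := by
          have hΔ : 0 ≤ L (j + 1) - L j := by
            have := hLmono j (by omega) (by omega); linarith
          have hθle' : θ k ≤ θ (j + 1) := hθle k (j + 1) hk (by omega) hjK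
          have h2 : θ k / θ (j + 1) ≤ 1 := (div_le_one hθj).mpr hθle'
          have h3 : 0 ≤ a / Lmax := by positivity
          exact mul_nonpos_of_nonneg_of_nonpos (mul_nonneg h3 hΔ) (by linarith)
        have := ih (by omega)
        linarith
    exact aux n (by omega) hnK
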